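/- The value of perception can be negative: there exist a finite probability space and a loss function for which E_P[ℓ(X,Y,u*)] < E_P[ℓ(X,Y,ψ̄(X))]. Concretely, with X = Y = U = {0,1}, the loss ℓ given by ℓ(x,y,0)=0 for all x,y, ℓ(0,0,1)=-1, ℓ(0,1,1)=1, ℓ(1,0,1)=1, ℓ(1,1,1)=1, and joint distribution P(0,0)=0.04, P(0,1)=0.06, P(1,0)=0.81, P(1,1)=0.09, the best constant action is u*=0 with expected loss 0, while the best product-distribution policy ψ̄ satisfies ψ̄(0)=1, ψ̄(1)=0 and achieves expected loss 0.02 > 0. -/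
import Mathlib

open Finset

/-- The value of perception (without prediction) can be negative: there is a
concrete finite example on `Bool` where the best constant action `u* = false`
strictly beats the best marginal-based policy `ψ̄`. -/
theorem value_of_perception_can_be_negative :
    ∃ (ℓ : Bool → Bool → Bool → ℝ) (P : Bool → Bool → ℝ)
      (ustar : Bool) (ψbar : Bool → Bool),
      (∀ x y, 0 ≤ P x y) ∧ (∑ x, ∑ y, P x y = 1) ∧
      -- the concrete data of the example
      (∀ x y, ℓ x y false = 0) ∧
      ℓ false false true = -1 ∧ ℓ false true true = 1 ∧
      ℓ true false true = 1 ∧ ℓ true true true = 1 ∧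
      P false false = 0.04 ∧ P false true = 0.06 ∧
      P true false = 0.81 ∧ P true true = 0.09 ∧
      -- u* minimizes the expected loss under P among constant actions
      (∀ u : Bool, ∑ x, ∑ y, P x y * ℓ x y ustar ≤ ∑ x, ∑ y, P x y * ℓ x y u) ∧
      ustar = false ∧
      -- ψ̄(x) minimizes u ↦ E_{P_Y}[ℓ(x, Y, u)] with P_Y the Y-marginal of P
      (∀ x : Bool, ∀ u : Bool,
        ∑ y, (∑ x', P x' y) * ℓ x y (ψbar x) ≤ ∑ y, (∑ x', P x' y) * ℓ x y u) ∧
      ψbar false = true ∧ ψbar true = false ∧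
      -- the risks: 0 for u*, 0.02 for ψ̄, hence a strictly negative value of perception
      (∑ x, ∑ y, P x y * ℓ x y ustar = 0) ∧
      (∑ x, ∑ y, P x y * ℓ x y (ψbar x) = 0.02) ∧
      ∑ x, ∑ y, P x y * ℓ x y ustar < ∑ x, ∑ y, P x y * ℓ x y (ψbar x) := by
  refine ⟨fun x y u => if u then (if x || y then 1 else -1) else 0,
    fun x y => if x then (if y then 0.09 else 0.81) else (if y then 0.06 else 0.04),
    false, fun x => !x, ?_, ?_, ?_, ?_, ?_, ?_, ?_, ?_, ?_, ?_, ?_, ?_, ?_, ?_, ?_, ?_, ?_, ?_, ?_⟩ <;>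
    first
      | norm_num [Fintype.sum_bool]
      | (intro u; cases u <;> norm_num [Fintype.sum_bool])
      | (intro x u; cases x <;> cases u <;> norm_num [Fintype.sum_bool])
      | (intro x y; cases x <;> cases y <;> norm_num)
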